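/- Let G be a connected k-uniform hypergraph with at least two edges, a pendant edge e = {w_1,...,w_k} at w_k, and vertex-disjoint connected k-uniform hypergraphs H_1,...,H_{k−1} with roots v_i ∈ V(H_i). Suppose |E(H_j)| ≥ 1 for some j. For 0 ≤ s ≤ k−1, let G_{e,s}(H_1,...,H_{k−1}) be the hypergraph obtained by identifying v_i with w_i for s+1 ≤ i ≤ k−1 and identifying v_i with w_k for 1 ≤ i ≤ s. Then for every s with j ≤ s ≤ k−1, σ(G_{e,0}(H_1,...,H_{k−1})) > σ(G_{e,s}(H_1,...,H_{k−1})). -/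

import Mathlib

open Finset

/-- A (finite) hypergraph: a finite vertex set together with a finite family of edges,
each edge being a finite set of vertices. -/
structure KHypergraph (α : Type) where
  verts : Finset α
  edges : Finset (Finset α)

namespace KHypergraph

variable {α β : Type}

/-- Every edge is a subset of the vertex set. -/
def Good (G : KHypergraph α) : Prop := ∀ e ∈ G.edges, e ⊆ G.verts

/-- `k`-uniform: every edge has cardinality `k`. -/
def Uniform (G : KHypergraph α) (k : ℕ) : Prop := ∀ e ∈ G.edges, e.card = k

/-- A walk of length `p` from `u` to `v`: an alternating sequence of vertices and edges,
with consecutive vertices distinct and both lying in the connecting edge. -/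
inductive Walk (G : KHypergraph α) : α → α → ℕ → Prop
  | nil (v : α) : Walk G v v 0
  | cons {u w : α} (v : α) {p : ℕ} (e : Finset α) (he : e ∈ G.edges)
      (hu : u ∈ e) (hv : v ∈ e) (hne : u ≠ v) (hw : Walk G v w p) :
      Walk G u w (p + 1)

def Connected (G : KHypergraph α) : Prop :=
  ∀ u ∈ G.verts, ∀ v ∈ G.verts, ∃ p, G.Walk u v p

/-- Distance: length of a shortest walk (equivalently, of a shortest path). -/
noncomputable def dist (G : KHypergraph α) (u v : α) : ℕ := sInf {p | G.Walk u v p}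

/-- `σ_G(u) = ∑_{v ∈ V(G)} d_G(u,v)`. -/
noncomputable def transFrom [DecidableEq α] (G : KHypergraph α) (u : α) : ℕ :=
  ∑ v ∈ G.verts, G.dist u v

/-- The transmission `σ(G)`: the sum of distances over all unordered pairs of
distinct vertices (distances being symmetric, this is half the sum over ordered pairs). -/
noncomputable def trans [DecidableEq α] (G : KHypergraph α) : ℕ :=
  (∑ u ∈ G.verts, ∑ v ∈ G.verts, G.dist u v) / 2

/-- `σ_G(A,B) = ∑_{a ∈ A, b ∈ B} d_G(a,b)`. -/
noncomputable def transBetween [DecidableEq α] (G : KHypergraph α) (A B : Finset α) : ℕ :=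
  ∑ a ∈ A, ∑ b ∈ B, G.dist a b

/-- The diameter: the maximum distance between two vertices. -/
noncomputable def diam (G : KHypergraph α) : ℕ :=
  G.verts.sup fun u => G.verts.sup fun v => G.dist u v

/-- The degree of a vertex: the number of edges containing it. -/
def degree [DecidableEq α] (G : KHypergraph α) (v : α) : ℕ :=
  (G.edges.filter fun e => v ∈ e).card

/-- A cycle of length `n+2` in `G`: vertices `v 0, …, v (n+1)` (all distinct) and
distinct edges `e 0, …, e (n+1)` of `G` with `v i, v (i+1) ∈ e i` (indices mod `n+2`). -/
structure Cycle (G : KHypergraph α) where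
  n : ℕ
  v : Fin (n + 2) → α
  e : Fin (n + 2) → Finset α
  he : ∀ i, e i ∈ G.edges
  einj : Function.Injective e
  vinj : Function.Injective v
  mem_fst : ∀ i, v i ∈ e i
  mem_snd : ∀ i, v (i + 1) ∈ e i

/-- The length of a cycle (its number of edges). -/
def Cycle.length {G : KHypergraph α} (C : G.Cycle) : ℕ := C.n + 2

/-- The set of edges of a cycle. -/
def Cycle.edgeFinset [DecidableEq α] {G : KHypergraph α} (C : G.Cycle) : Finset (Finset α) :=
  Finset.univ.image C.e

/-- Unicyclic: connected with exactly one cycle (all cycles have the same edge set). -/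
def Unicyclic [DecidableEq α] (G : KHypergraph α) : Prop :=
  G.Connected ∧ Nonempty G.Cycle ∧ ∀ C C' : G.Cycle, C.edgeFinset = C'.edgeFinset

/-- Isomorphism of hypergraphs. -/
def Isomorphic [DecidableEq β] (G : KHypergraph α) (H : KHypergraph β) : Prop :=
  ∃ f : α → β, Set.BijOn f ↑G.verts ↑H.verts ∧
    ∀ e : Finset α, e ⊆ G.verts → (e ∈ G.edges ↔ e.image f ∈ H.edges)

/-- Rename the vertices of a hypergraph along `f`. -/
def mapHG [DecidableEq β] (f : α → β) (G : KHypergraph α) : KHypergraph β :=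
  ⟨G.verts.image f, G.edges.image (Finset.image f)⟩

def unionHG [DecidableEq α] (G H : KHypergraph α) : KHypergraph α :=
  ⟨G.verts ∪ H.verts, G.edges ∪ H.edges⟩

def unionMany [DecidableEq α] {n : ℕ} (Hs : Fin n → KHypergraph α) : KHypergraph α :=
  ⟨Finset.univ.biUnion fun i => (Hs i).verts, Finset.univ.biUnion fun i => (Hs i).edges⟩

/-- Move the edge `e` from `u` to `x`: replace `e` by `(e \ {u}) ∪ {x}`. -/
def moveEdge [DecidableEq α] (G : KHypergraph α) (e : Finset α) (u x : α) : KHypergraph α :=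
  ⟨G.verts, insert (insert x (e.erase u)) (G.edges.erase e)⟩

/-- Move each edge of `S` from `u` to `x`. -/
def moveEdges [DecidableEq α] (G : KHypergraph α) (S : Finset (Finset α)) (u x : α) :
    KHypergraph α :=
  ⟨G.verts, (G.edges \ S) ∪ S.image fun e => insert x (e.erase u)⟩

/-- Delete a set of edges (keeping all vertices). -/
def deleteEdges [DecidableEq α] (G : KHypergraph α) (S : Finset (Finset α)) : KHypergraph α :=
  ⟨G.verts, G.edges \ S⟩

open Classical in
/-- The vertex set of the component of `G` containing `u`. -/
noncomputable def component (G : KHypergraph α) (u : α) : Finset α :=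
  G.verts.filter fun x => ∃ p, G.Walk u x p

/-- The component of `G` containing `u`, as a hypergraph. -/
noncomputable def componentHG [DecidableEq α] (G : KHypergraph α) (u : α) : KHypergraph α :=
  ⟨G.component u, G.edges.filter fun e => e ⊆ G.component u⟩

/-- The `k`-uniform loose cycle with `m` edges `e_0, …, e_{m-1}`,
consecutive edges sharing exactly one vertex. -/
def looseCycle (m k : ℕ) : KHypergraph ℕ where
  verts := Finset.range (m * (k - 1))
  edges := (Finset.range m).image fun i =>
    (Finset.range k).image fun j => (i * (k - 1) + j) % (m * (k - 1))

/-- `C^k_2(t,s)`: two `k`-edges sharing exactly the two vertices `0,1`, with a hyperstar of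
`t` edges attached at `0` and a hyperstar of `s` edges attached at `1`. -/
def Ck2 (k t s : ℕ) : KHypergraph ℕ where
  verts := Finset.range ((t + s + 2) * (k - 1))
  edges :=
    {Finset.range k, insert 0 (insert 1 (Finset.Ico k (2 * k - 2)))} ∪
    ((Finset.range t).image fun i =>
      insert 0 (Finset.Ico (2 * k - 2 + i * (k - 1)) (2 * k - 2 + (i + 1) * (k - 1)))) ∪
    ((Finset.range s).image fun j =>
      insert 1 (Finset.Ico (2 * k - 2 + t * (k - 1) + j * (k - 1))
        (2 * k - 2 + t * (k - 1) + (j + 1) * (k - 1))))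

/-- `C̃^k_2(p,q)`: the loose 2-cycle on the two `k`-edges `{0,…,k-1}` and
`{0,1} ∪ {k,…,2k-3}` (sharing exactly `0,1`), with a pendant path of length `p`
attached at the degree-one vertex `2` of the first edge and a pendant path of length `q`
attached at the degree-one vertex `k` of the second edge. -/
def Ctilde (k p q : ℕ) : KHypergraph ℕ where
  verts := Finset.range ((p + q + 2) * (k - 1))
  edges :=
    {Finset.range k, insert 0 (insert 1 (Finset.Ico k (2 * k - 2)))} ∪
    ((Finset.range p).image fun i =>
      insert (if i = 0 then 2 else 2 * k - 2 + i * (k - 1) - 1)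
        (Finset.Ico (2 * k - 2 + i * (k - 1)) (2 * k - 2 + (i + 1) * (k - 1)))) ∪
    ((Finset.range q).image fun j =>
      insert (if j = 0 then k else 2 * k - 2 + p * (k - 1) + j * (k - 1) - 1)
        (Finset.Ico (2 * k - 2 + p * (k - 1) + j * (k - 1))
          (2 * k - 2 + p * (k - 1) + (j + 1) * (k - 1))))

/-- The triangle with one pendant edge, `C^2_3(1,0,0)`. -/
def triPendant : KHypergraph ℕ :=
  ⟨Finset.range 4, {{0, 1}, {1, 2}, {0, 2}, {0, 3}}⟩

/-- `G_{u,v}(p,q)`: attach a loose pendant path of `p` `k`-edges at `u` and a loose pendant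
path of `q` `k`-edges at `v`, using fresh vertices (the `Sum.inr` side). -/
def attachTwoPathsAt [DecidableEq α] (k : ℕ) (G : KHypergraph α) (u v : α) (p q : ℕ) :
    KHypergraph (α ⊕ ℕ) where
  verts := G.verts.image Sum.inl ∪ (Finset.range ((p + q) * (k - 1))).image Sum.inr
  edges :=
    G.edges.image (Finset.image Sum.inl) ∪
    ((Finset.range p).image fun i =>
      insert (if i = 0 then Sum.inl u else Sum.inr (i * (k - 1) - 1))
        ((Finset.Ico (i * (k - 1)) ((i + 1) * (k - 1))).image Sum.inr)) ∪
    ((Finset.range q).image fun j =>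
      insert (if j = 0 then Sum.inl v else Sum.inr (p * (k - 1) + j * (k - 1) - 1))
        ((Finset.Ico (p * (k - 1) + j * (k - 1)) (p * (k - 1) + (j + 1) * (k - 1))).image
          Sum.inr))

/-- `G_u(p,q)`: attach two loose pendant paths, of lengths `p` and `q`, at `u`. -/
def attachTwoPaths [DecidableEq α] (k : ℕ) (G : KHypergraph α) (u : α) (p q : ℕ) :
    KHypergraph (α ⊕ ℕ) :=
  attachTwoPathsAt k G u u p q

/-- `G_{e,s}(H_1,…,H_{k-1})`: given a pendant edge `e = {w 0, …, w (k-1)}` of `G` at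
`w (k-1)`, identify the root `vr i` of `H i` with `w (k-1)` for (0-based) `i < s`, and with
`w i` for `i ≥ s`. -/
def Ges [DecidableEq α] (G : KHypergraph α) (k : ℕ) (hk : 2 ≤ k) (w : Fin k → α)
    (H : Fin (k - 1) → KHypergraph α) (vr : Fin (k - 1) → α) (s : ℕ) : KHypergraph α :=
  unionHG G (unionMany fun i : Fin (k - 1) =>
    mapHG (Function.update id (vr i)
      (if (i : ℕ) < s then w ⟨k - 1, by omega⟩ else w (Fin.castLE (Nat.sub_le k 1) i))) (H i))

end KHypergraph

open KHypergraph

/-! Gluing rooted hypergraphs `H i` onto vertices `t i` of `G` gives explicit distances: within a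
branch they are distances in `H i`, and otherwise they are the depths of the two endpoints in their
branches plus the distance in `G` between their attachment points. The transmission therefore
depends on `t` only through the transmissions `σ_G(t i)` and the distances `d_G(t i, t m)`. Moving
the attachment point of a branch from a pendant vertex `w i` of `e` to `w k` lowers `σ_G` by
`|V(G) ∖ e| > 0`, because every walk from `w i` leaving `e` passes through `w k`, while all
distances between attachment points stay at most `1`. -/

namespace KHypergraph

variable {α : Type}

section Walks

variable {G : KHypergraph α} {u v x : α} {p q : ℕ}

theorem Walk.append (h₁ : G.Walk u v p) (h₂ : G.Walk v x q) : G.Walk u x (p + q) := by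
  induction h₁ with
  | nil => simpa using h₂
  | cons v e he hu hv hne _ ih =>
    simpa [Nat.add_right_comm] using Walk.cons v e he hu hv hne (ih h₂)

theorem Walk.single {e : Finset α} (he : e ∈ G.edges) (hu : u ∈ e) (hv : v ∈ e) (hne : u ≠ v) :
    G.Walk u v 1 :=
  Walk.cons v e he hu hv hne (Walk.nil v)

theorem Walk.reverse (h : G.Walk u v p) : G.Walk v u p := by
  induction h with
  | nil => exact Walk.nil _
  | cons v e he hu hv hne _ ih => exact ih.append (Walk.single he hv hu hne.symm)

theorem Walk.mono {U : KHypergraph α} (hsub : G.edges ⊆ U.edges) (h : G.Walk u v p) :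
    U.Walk u v p := by
  induction h with
  | nil => exact Walk.nil _
  | cons v e he hu hv hne _ ih => exact Walk.cons v e (hsub he) hu hv hne ih

theorem Walk.map {β : Type} [DecidableEq β] {U : KHypergraph β} {f : α → β} (hgood : G.Good)
    (hinj : Set.InjOn f G.verts) (hedges : ∀ e ∈ G.edges, e.image f ∈ U.edges)
    (h : G.Walk u v p) : U.Walk (f u) (f v) p := by
  induction h with
  | nil => exact Walk.nil _
  | cons v e he hu hv hne _ ih =>
    exact Walk.cons (f v) (e.image f) (hedges e he) (mem_image_of_mem f hu)
      (mem_image_of_mem f hv) (fun h => hne (hinj (hgood e he hu) (hgood e he hv) h)) ih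

theorem Walk.le_add {φ : α → ℕ} (hφ : ∀ e ∈ G.edges, ∀ a ∈ e, ∀ b ∈ e, φ a ≤ φ b + 1)
    (h : G.Walk u v p) : φ u ≤ φ v + p := by
  induction h with
  | nil => omega
  | cons v e he hu hv _ _ ih => have := hφ e he _ hu _ hv; omega

theorem dist_le (h : G.Walk u v p) : G.dist u v ≤ p := Nat.sInf_le h

theorem walk_dist (h : G.Walk u v p) : G.Walk u v (G.dist u v) := Nat.sInf_mem ⟨p, h⟩

theorem dist_self (u : α) : G.dist u u = 0 := Nat.le_zero.mp (dist_le (Walk.nil u))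

theorem dist_comm (u v : α) : G.dist u v = G.dist v u :=
  congrArg sInf (Set.ext fun _ => ⟨Walk.reverse, Walk.reverse⟩)

theorem dist_le_dist_add_one {e : Finset α} (he : e ∈ G.edges) {a b : α} (ha : a ∈ e) (hb : b ∈ e)
    (h : G.Walk b v p) : G.dist a v ≤ G.dist b v + 1 := by
  rcases eq_or_ne a b with rfl | hne
  · omega
  · exact dist_le (Walk.cons b e he ha hb hne (walk_dist h))

theorem dist_eq_one {e : Finset α} (he : e ∈ G.edges) (hu : u ∈ e) (hv : v ∈ e) (hne : u ≠ v) :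
    G.dist u v = 1 := by
  have hw := walk_dist (Walk.single he hu hv hne)
  have hle : G.dist u v ≤ 1 := dist_le (Walk.single he hu hv hne)
  rcases Nat.le_one_iff_eq_zero_or_eq_one.mp hle with h0 | h1
  · rw [h0] at hw
    cases hw
    exact absurd rfl hne
  · exact h1

theorem dist_le_one {e : Finset α} (he : e ∈ G.edges) (hu : u ∈ e) (hv : v ∈ e) :
    G.dist u v ≤ 1 := by
  rcases eq_or_ne u v with rfl | hne
  · simp [dist_self]
  · exact (dist_eq_one he hu hv hne).le

theorem sum_dist_of_mem_edge [DecidableEq α] {e : Finset α} (he : e ∈ G.edges) (hu : u ∈ e) :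
    ∑ v ∈ e, G.dist u v = e.card - 1 := by
  rw [← add_sum_erase _ _ hu, dist_self, zero_add,
    sum_congr rfl fun v hv => dist_eq_one he hu (mem_of_mem_erase hv) (ne_of_mem_erase hv).symm,
    sum_const, card_erase_of_mem hu, smul_eq_mul, mul_one]

theorem sum_sum_dist_union [DecidableEq α] (A B : Finset α) (hAB : Disjoint A B) :
    ∑ u ∈ A ∪ B, ∑ v ∈ A ∪ B, G.dist u v = ∑ u ∈ A, ∑ v ∈ A, G.dist u v
      + 2 * ∑ u ∈ B, ∑ v ∈ A, G.dist u v + ∑ u ∈ B, ∑ v ∈ B, G.dist u v := by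
  have hswap : ∑ u ∈ A, ∑ v ∈ B, G.dist u v = ∑ u ∈ B, ∑ v ∈ A, G.dist u v := by
    rw [sum_comm]
    exact sum_congr rfl fun _ _ => sum_congr rfl fun _ _ => dist_comm _ _
  simp only [sum_union hAB, sum_add_distrib]
  omega

end Walks

section Pendant

variable {G : KHypergraph α} {e : Finset α} {c : α}

theorem eq_of_degree_eq_one [DecidableEq α] {x : α} (hx : G.degree x = 1) (he : e ∈ G.edges)
    (hxe : x ∈ e) {f : Finset α} (hf : f ∈ G.edges) (hxf : x ∈ f) : f = e := by
  obtain ⟨g, hg⟩ := card_eq_one.mp hx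
  have hfg : f ∈ G.edges.filter (x ∈ ·) := mem_filter.mpr ⟨hf, hxf⟩
  have heg : e ∈ G.edges.filter (x ∈ ·) := mem_filter.mpr ⟨he, hxe⟩
  rw [hg, mem_singleton] at hfg heg
  rw [hfg, heg]

variable (hpend : ∀ x ∈ e, x ≠ c → ∀ f ∈ G.edges, x ∈ f → f = e)
include hpend

theorem sdiff_edge_nonempty [DecidableEq α] (hgood : G.Good) {f : Finset α} (hf : f ∈ G.edges)
    (hfe : f ≠ e) (hcard : 1 < f.card) : (G.verts \ e).Nonempty := by
  obtain ⟨z, hzf, hzc⟩ := exists_mem_ne hcard c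
  exact ⟨z, mem_sdiff.mpr ⟨hgood f hf hzf, fun hze => hfe (hpend z hze hzc f hf hzf)⟩⟩

/-- Every walk leaving the pendant edge `e` from a vertex other than `c` passes through `c`. -/
theorem dist_add_one_le_of_walk {x y : α} {p : ℕ} (h : G.Walk x y p) (hx : x ∈ e) (hxc : x ≠ c)
    (hy : y ∉ e) : G.dist c y + 1 ≤ p := by
  induction h with
  | nil => exact absurd hx hy
  | cons v f hf hxf hvf _ hw ih =>
    obtain rfl := hpend _ hx hxc f hf hxf
    rcases eq_or_ne v c with rfl | hvc
    · have := dist_le hw; omega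
    · have := ih hvf hvc hy; omega

theorem dist_eq_dist_add_one_of_pendant (he : e ∈ G.edges) (hc : c ∈ e) {x y : α} (hx : x ∈ e)
    (hxc : x ≠ c) (hy : y ∉ e) (hcy : G.Walk c y p) : G.dist x y = G.dist c y + 1 :=
  le_antisymm (dist_le_dist_add_one he hx hc hcy)
    (dist_add_one_le_of_walk hpend (walk_dist (Walk.cons c e he hx hc hxc hcy)) hx hxc hy)

theorem transFrom_add_card_sdiff [DecidableEq α] (hgood : G.Good) (hconn : G.Connected)
    (he : e ∈ G.edges) (hc : c ∈ e) {x : α} (hx : x ∈ e) (hxc : x ≠ c) :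
    G.transFrom c + (G.verts \ e).card = G.transFrom x := by
  have hsplit : ∀ z ∈ e, G.transFrom z = e.card - 1 + ∑ y ∈ G.verts \ e, G.dist z y :=
    fun z hz => by rw [transFrom, ← sum_sdiff (hgood e he), sum_dist_of_mem_edge he hz, add_comm]
  have hout : ∑ y ∈ G.verts \ e, G.dist x y = ∑ y ∈ G.verts \ e, (G.dist c y + 1) :=
    sum_congr rfl fun y hy => by
      obtain ⟨hyv, hye⟩ := mem_sdiff.mp hy
      obtain ⟨p, hp⟩ := hconn c (hgood e he hc) y hyv
      exact dist_eq_dist_add_one_of_pendant hpend he hc hx hxc hye hp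
  rw [hsplit c hc, hsplit x hx, hout, sum_add_distrib, card_eq_sum_ones (G.verts \ e)]
  omega

theorem transFrom_lt_of_pendant [DecidableEq α] (hgood : G.Good) (hconn : G.Connected)
    (he : e ∈ G.edges) (hc : c ∈ e) {f : Finset α} (hf : f ∈ G.edges) (hfe : f ≠ e)
    (hcard : 1 < f.card) {x : α} (hx : x ∈ e) (hxc : x ≠ c) : G.transFrom c < G.transFrom x := by
  rw [← transFrom_add_card_sdiff hpend hgood hconn he hc hx hxc]
  have := (sdiff_edge_nonempty hpend hgood hf hfe hcard).card_pos
  omega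

end Pendant

section Attach

variable [DecidableEq α] {n : ℕ}

/-- `G` with each `H i` glued on by identifying its root `r i` with `t i`. -/
def attach (G : KHypergraph α) (H : Fin n → KHypergraph α) (r t : Fin n → α) : KHypergraph α :=
  unionHG G (unionMany fun i => mapHG (Function.update id (r i) (t i)) (H i))

def branch (H : Fin n → KHypergraph α) (r : Fin n → α) (i : Fin n) : Finset α :=
  (H i).verts.erase (r i)

/-- The attachment point of the branch containing `z`, and `z` itself off the branches. -/
noncomputable def home (H : Fin n → KHypergraph α) (r t : Fin n → α) (z : α) : α :=
  if h : ∃ i, z ∈ branch H r i then t h.choose else z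

noncomputable def depth (H : Fin n → KHypergraph α) (r : Fin n → α) (z : α) : ℕ :=
  if h : ∃ i, z ∈ branch H r i then (H h.choose).dist z (r h.choose) else 0

noncomputable def attachDist (G : KHypergraph α) (H : Fin n → KHypergraph α) (r t : Fin n → α)
    (u v : α) : ℕ :=
  if h : ∃ i, u ∈ branch H r i ∧ v ∈ branch H r i then (H h.choose).dist u v
  else depth H r u + G.dist (home H r t u) (home H r t v) + depth H r v

structure IsAttachable (G : KHypergraph α) (H : Fin n → KHypergraph α) (r : Fin n → α) :
    Prop where
  good : G.Good
  connected : G.Connected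
  good_branch : ∀ i, (H i).Good
  connected_branch : ∀ i, (H i).Connected
  root_mem : ∀ i, r i ∈ (H i).verts
  disjoint : ∀ i, Disjoint (H i).verts G.verts
  pairwise_disjoint : ∀ i j, i ≠ j → Disjoint (H i).verts (H j).verts

variable {G : KHypergraph α} {H : Fin n → KHypergraph α} {r t : Fin n → α}

theorem branch_nonempty {i : Fin n} (hgood : (H i).Good) {g : Finset α} (hg : g ∈ (H i).edges)
    (hcard : 1 < g.card) : (branch H r i).Nonempty := by
  obtain ⟨y, hyg, hy⟩ := exists_mem_ne hcard (r i)
  exact ⟨y, mem_erase.mpr ⟨hy, hgood g hg hyg⟩⟩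

theorem mem_edges_attach {f : Finset α} : f ∈ (attach G H r t).edges ↔
    f ∈ G.edges ∨ ∃ i, ∃ g ∈ (H i).edges, g.image (Function.update id (r i) (t i)) = f := by
  simp [attach, unionHG, unionMany, mapHG]

theorem verts_attach (ht : ∀ i, t i ∈ G.verts) :
    (attach G H r t).verts = G.verts ∪ univ.biUnion (branch H r) := by
  ext z
  simp only [attach, unionHG, unionMany, mapHG, mem_union, mem_biUnion, mem_univ, true_and,
    mem_image]
  constructor
  · rintro (hz | ⟨i, x, hx, rfl⟩)
    · exact Or.inl hz
    · rcases eq_or_ne x (r i) with rfl | hx'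
      · exact Or.inl (by simpa using ht i)
      · refine Or.inr ⟨i, ?_⟩
        rw [Function.update_of_ne hx']
        exact mem_erase.mpr ⟨hx', hx⟩
  · rintro (hz | ⟨i, hz⟩)
    · exact Or.inl hz
    · exact Or.inr ⟨i, z, mem_of_mem_erase hz, by simp [(ne_of_mem_erase hz)]⟩

theorem mem_verts_attach_of_mem_branch (ht : ∀ i, t i ∈ G.verts) {u : α} {i : Fin n}
    (hu : u ∈ branch H r i) : u ∈ (attach G H r t).verts := by
  rw [verts_attach ht]
  exact mem_union_right _ (mem_biUnion.mpr ⟨i, mem_univ i, hu⟩)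

theorem mem_verts_attach_of_mem_verts (ht : ∀ i, t i ∈ G.verts) {u : α} (hu : u ∈ G.verts) :
    u ∈ (attach G H r t).verts := by
  rw [verts_attach ht]
  exact mem_union_left _ hu

theorem attachDist_of_forall_not_mem {u v : α}
    (h : ∀ i, ¬(u ∈ branch H r i ∧ v ∈ branch H r i)) :
    attachDist G H r t u v = depth H r u + G.dist (home H r t u) (home H r t v) + depth H r v :=
  dif_neg fun ⟨i, hi⟩ => h i hi

section Attachable

variable (hA : IsAttachable G H r)
include hA

theorem eq_of_mem_branch {z : α} {i j : Fin n} (hi : z ∈ branch H r i) (hj : z ∈ branch H r j) :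
    i = j := by
  by_contra hij
  exact disjoint_left.mp (hA.pairwise_disjoint i j hij) (mem_of_mem_erase hi) (mem_of_mem_erase hj)

theorem not_mem_branch {z : α} (hz : z ∈ G.verts) (i : Fin n) : z ∉ branch H r i :=
  fun hi => disjoint_left.mp (hA.disjoint i) (mem_of_mem_erase hi) hz

theorem home_of_mem_branch {z : α} {i : Fin n} (hz : z ∈ branch H r i) : home H r t z = t i := by
  have h : ∃ i, z ∈ branch H r i := ⟨i, hz⟩
  rw [home, dif_pos h, eq_of_mem_branch hA h.choose_spec hz]

theorem depth_of_mem_branch {z : α} {i : Fin n} (hz : z ∈ branch H r i) :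
    depth H r z = (H i).dist z (r i) := by
  have h : ∃ i, z ∈ branch H r i := ⟨i, hz⟩
  rw [depth, dif_pos h, eq_of_mem_branch hA h.choose_spec hz]

theorem home_of_mem {z : α} (hz : z ∈ G.verts) : home H r t z = z :=
  dif_neg fun ⟨i, hi⟩ => not_mem_branch hA hz i hi

theorem depth_of_mem {z : α} (hz : z ∈ G.verts) : depth H r z = 0 :=
  dif_neg fun ⟨i, hi⟩ => not_mem_branch hA hz i hi

theorem attachDist_of_mem_branch {u v : α} {i : Fin n} (hu : u ∈ branch H r i)
    (hv : v ∈ branch H r i) : attachDist G H r t u v = (H i).dist u v := by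
  have h : ∃ i, u ∈ branch H r i ∧ v ∈ branch H r i := ⟨i, hu, hv⟩
  rw [attachDist, dif_pos h, eq_of_mem_branch hA h.choose_spec.1 hu]

theorem attachDist_self (v : α) : attachDist G H r t v v = 0 := by
  by_cases h : ∃ i, v ∈ branch H r i
  · obtain ⟨i, hi⟩ := h
    rw [attachDist_of_mem_branch hA hi hi, dist_self]
  · push Not at h
    rw [attachDist_of_forall_not_mem fun i hi => h i hi.1, dist_self, depth, dif_neg]
    push Not
    exact h

theorem attachDist_of_mem_verts {u v : α} (hu : u ∈ G.verts) (hv : v ∈ G.verts) :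
    attachDist G H r t u v = G.dist u v := by
  rw [attachDist_of_forall_not_mem fun i hi => not_mem_branch hA hu i hi.1, depth_of_mem hA hu,
    depth_of_mem hA hv, home_of_mem hA hu, home_of_mem hA hv, zero_add, add_zero]

theorem attachDist_of_mem_branch_of_mem_verts {u v : α} {i : Fin n} (hu : u ∈ branch H r i)
    (hv : v ∈ G.verts) : attachDist G H r t u v = (H i).dist u (r i) + G.dist (t i) v := by
  rw [attachDist_of_forall_not_mem fun m hm => not_mem_branch hA hv m hm.2, depth_of_mem hA hv,
    home_of_mem hA hv, home_of_mem_branch hA hu, depth_of_mem_branch hA hu, add_zero]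

theorem attachDist_of_mem_branch_of_ne {u v : α} {i m : Fin n} (hu : u ∈ branch H r i)
    (hv : v ∈ branch H r m) (him : i ≠ m) :
    attachDist G H r t u v = (H i).dist u (r i) + G.dist (t i) (t m) + (H m).dist v (r m) := by
  rw [attachDist_of_forall_not_mem fun l hl => him ((eq_of_mem_branch hA hu hl.1).trans
      (eq_of_mem_branch hA hl.2 hv)),
    home_of_mem_branch hA hu, home_of_mem_branch hA hv, depth_of_mem_branch hA hu,
    depth_of_mem_branch hA hv]

variable (ht : ∀ i, t i ∈ G.verts)
include ht

theorem update_injOn (i : Fin n) :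
    Set.InjOn (Function.update id (r i) (t i)) (H i).verts := by
  intro x hx y hy hxy
  have ht' : t i ∉ (H i).verts := disjoint_right.mp (hA.disjoint i) (ht i)
  rcases eq_or_ne x (r i) with rfl | hx' <;> rcases eq_or_ne y (r i) with rfl | hy'
  · rfl
  · simp_all
  · simp_all
  · simpa [hx', hy'] using hxy

theorem home_depth_update {i : Fin n} {x : α} (hx : x ∈ (H i).verts) :
    home H r t (Function.update id (r i) (t i) x) = t i ∧
      depth H r (Function.update id (r i) (t i) x) = (H i).dist x (r i) := by
  rcases eq_or_ne x (r i) with rfl | hx'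
  · simp only [Function.update_self]
    exact ⟨home_of_mem hA (ht i), by rw [depth_of_mem hA (ht i), dist_self]⟩
  · have hxb : x ∈ branch H r i := mem_erase.mpr ⟨hx', hx⟩
    simp only [Function.update_of_ne hx', id]
    exact ⟨home_of_mem_branch hA hxb, depth_of_mem_branch hA hxb⟩

theorem attachDist_update {i : Fin n} {x : α} (hx : x ∈ (H i).verts) (v : α) :
    attachDist G H r t (Function.update id (r i) (t i) x) v =
      if v ∈ branch H r i then (H i).dist x v
      else (H i).dist x (r i) + G.dist (t i) (home H r t v) + depth H r v := by
  obtain ⟨hhome, hdepth⟩ := home_depth_update hA ht hx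
  split_ifs with hv
  · rcases eq_or_ne x (r i) with rfl | hx'
    · rw [Function.update_self, attachDist_of_forall_not_mem
        fun m hm => not_mem_branch hA (ht i) m hm.1, depth_of_mem hA (ht i), home_of_mem hA (ht i),
        home_of_mem_branch hA hv, dist_self, depth_of_mem_branch hA hv, dist_comm]
      simp
    · have hxb : x ∈ branch H r i := mem_erase.mpr ⟨hx', hx⟩
      rw [Function.update_of_ne hx', id, attachDist_of_mem_branch hA hxb hv]
  · rw [attachDist_of_forall_not_mem, hhome, hdepth]
    intro m ⟨hxm, hvm⟩
    rcases eq_or_ne x (r i) with rfl | hx'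
    · exact not_mem_branch hA (ht i) m (by simpa using hxm)
    · rw [Function.update_of_ne hx', id] at hxm
      exact hv (eq_of_mem_branch hA (mem_erase.mpr ⟨hx', hx⟩) hxm ▸ hvm)

theorem walk_update {i : Fin n} {x y : α} (hx : x ∈ (H i).verts) (hy : y ∈ (H i).verts) :
    (attach G H r t).Walk (Function.update id (r i) (t i) x) (Function.update id (r i) (t i) y)
      ((H i).dist x y) :=
  Walk.map (hA.good_branch i) (update_injOn hA ht i)
    (fun g hg => mem_edges_attach.mpr (Or.inr ⟨i, g, hg, rfl⟩))
    (walk_dist ((hA.connected_branch i) x hx y hy).choose_spec)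

theorem home_mem {v : α} (hv : v ∈ (attach G H r t).verts) : home H r t v ∈ G.verts := by
  rw [verts_attach ht, mem_union, mem_biUnion] at hv
  rcases hv with hv | ⟨i, -, hv⟩
  · rwa [home_of_mem hA hv]
  · rw [home_of_mem_branch hA hv]; exact ht i

theorem walk_home {v : α} (hv : v ∈ (attach G H r t).verts) :
    (attach G H r t).Walk v (home H r t v) (depth H r v) := by
  rw [verts_attach ht, mem_union, mem_biUnion] at hv
  rcases hv with hv | ⟨i, -, hv⟩
  · rw [home_of_mem hA hv, depth_of_mem hA hv]
    exact Walk.nil v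
  · have hw := walk_update hA ht (mem_of_mem_erase hv) (hA.root_mem i)
    rwa [Function.update_of_ne (ne_of_mem_erase hv), Function.update_self,
      ← home_of_mem_branch hA (t := t) hv, ← depth_of_mem_branch hA hv] at hw

theorem walk_attachDist {u v : α} (hu : u ∈ (attach G H r t).verts)
    (hv : v ∈ (attach G H r t).verts) : (attach G H r t).Walk u v (attachDist G H r t u v) := by
  by_cases h : ∃ i, u ∈ branch H r i ∧ v ∈ branch H r i
  · obtain ⟨i, hui, hvi⟩ := h
    have hw := walk_update hA ht (mem_of_mem_erase hui) (mem_of_mem_erase hvi)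
    rwa [Function.update_of_ne (ne_of_mem_erase hui), Function.update_of_ne (ne_of_mem_erase hvi),
      ← attachDist_of_mem_branch hA hui hvi] at hw
  · push Not at h
    rw [attachDist_of_forall_not_mem fun i hi => h i hi.1 hi.2]
    have hG := (hA.connected _ (home_mem hA ht hu) _ (home_mem hA ht hv)).choose_spec
    exact ((walk_home hA ht hu).append
      ((walk_dist hG).mono fun f hf => mem_edges_attach.mpr (Or.inl hf))).append
      (walk_home hA ht hv).reverse

theorem attachDist_le_add_one {v : α} (hv : v ∈ (attach G H r t).verts) {f : Finset α}
    (hf : f ∈ (attach G H r t).edges) {a b : α} (ha : a ∈ f) (hb : b ∈ f) :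
    attachDist G H r t a v ≤ attachDist G H r t b v + 1 := by
  rcases mem_edges_attach.mp hf with hfG | ⟨i, g, hg, rfl⟩
  · have hG : ∀ z ∈ f, attachDist G H r t z v = G.dist z (home H r t v) + depth H r v :=
      fun z hz => by
        have hzG := hA.good f hfG hz
        rw [attachDist_of_forall_not_mem fun i hi => not_mem_branch hA hzG i hi.1,
          depth_of_mem hA hzG, home_of_mem hA hzG, zero_add]
    rw [hG a ha, hG b hb]
    have := dist_le_dist_add_one hfG ha hb
      (hA.connected b (hA.good f hfG hb) _ (home_mem hA ht hv)).choose_spec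
    omega
  · obtain ⟨x, hx, rfl⟩ := mem_image.mp ha
    obtain ⟨y, hy, rfl⟩ := mem_image.mp hb
    have hxH := hA.good_branch i g hg hx
    have hyH := hA.good_branch i g hg hy
    rw [attachDist_update hA ht hxH, attachDist_update hA ht hyH]
    split_ifs with hvi
    · exact dist_le_dist_add_one hg hx hy
        ((hA.connected_branch i) y hyH v (mem_of_mem_erase hvi)).choose_spec
    · have := dist_le_dist_add_one hg hx hy
        ((hA.connected_branch i) y hyH (r i) (hA.root_mem i)).choose_spec
      omega

theorem dist_attach {u v : α} (hu : u ∈ (attach G H r t).verts)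
    (hv : v ∈ (attach G H r t).verts) : (attach G H r t).dist u v = attachDist G H r t u v := by
  have hw := walk_attachDist hA ht hu hv
  have hlower := (walk_dist hw).le_add (φ := (attachDist G H r t · v))
    fun f hf a ha b hb => attachDist_le_add_one hA ht hv hf ha hb
  rw [attachDist_self hA] at hlower
  exact le_antisymm (dist_le hw) (by omega)

theorem sum_dist_attach_of_mem_branch {u : α} {i : Fin n} (hu : u ∈ branch H r i) :
    ∑ v ∈ G.verts, (attach G H r t).dist u v =
      G.verts.card * (H i).dist u (r i) + G.transFrom (t i) := by
  rw [transFrom, card_eq_sum_ones, sum_mul, one_mul, ← sum_add_distrib]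
  refine sum_congr rfl fun v hv => ?_
  rw [dist_attach hA ht (mem_verts_attach_of_mem_branch ht hu)
      (mem_verts_attach_of_mem_verts ht hv),
    attachDist_of_mem_branch_of_mem_verts hA hu hv]

end Attachable

theorem trans_attach_lt (hA : IsAttachable G H r) {t' : Fin n → α} (ht : ∀ i, t i ∈ G.verts)
    (ht' : ∀ i, t' i ∈ G.verts) (htrans : ∀ i, G.transFrom (t' i) ≤ G.transFrom (t i))
    (hdist : ∀ i m, i ≠ m → G.dist (t' i) (t' m) ≤ G.dist (t i) (t m)) {j : Fin n}
    (hj : (branch H r j).Nonempty) (hjlt : G.transFrom (t' j) < G.transFrom (t j)) :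
    (attach G H r t').trans < (attach G H r t).trans := by
  set P := univ.biUnion (branch H r)
  have hGP : Disjoint G.verts P := (disjoint_biUnion_right _ _ _).mpr fun i _ =>
    disjoint_of_subset_right (erase_subset _ _) (hA.disjoint i).symm
  have hP : Set.PairwiseDisjoint ↑(univ : Finset (Fin n)) (branch H r) :=
    fun i _ m _ him => disjoint_of_subset_left (erase_subset _ _)
      (disjoint_of_subset_right (erase_subset _ _) (hA.pairwise_disjoint i m him))
  have hGG : ∀ s : Fin n → α, (∀ i, s i ∈ G.verts) →
      ∑ u ∈ G.verts, ∑ v ∈ G.verts, (attach G H r s).dist u v =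
        ∑ u ∈ G.verts, ∑ v ∈ G.verts, G.dist u v := fun s hs =>
    sum_congr rfl fun u hu => sum_congr rfl fun v hv => by
      rw [dist_attach hA hs (mem_verts_attach_of_mem_verts hs hu)
        (mem_verts_attach_of_mem_verts hs hv), attachDist_of_mem_verts hA hu hv]
  have hPG : ∑ u ∈ P, ∑ v ∈ G.verts, (attach G H r t').dist u v <
      ∑ u ∈ P, ∑ v ∈ G.verts, (attach G H r t).dist u v := by
    rw [sum_biUnion hP, sum_biUnion hP]
    refine sum_lt_sum (fun i _ => sum_le_sum fun u hu => ?_) ⟨j, mem_univ j,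
      sum_lt_sum_of_nonempty hj fun u hu => ?_⟩
    · rw [sum_dist_attach_of_mem_branch hA ht hu, sum_dist_attach_of_mem_branch hA ht' hu]
      exact Nat.add_le_add_left (htrans i) _
    · rw [sum_dist_attach_of_mem_branch hA ht hu, sum_dist_attach_of_mem_branch hA ht' hu]
      exact Nat.add_lt_add_left hjlt _
  have hPP : ∑ u ∈ P, ∑ v ∈ P, (attach G H r t').dist u v ≤
      ∑ u ∈ P, ∑ v ∈ P, (attach G H r t).dist u v := by
    refine sum_le_sum fun u hu => sum_le_sum fun v hv => ?_
    obtain ⟨i, -, hui⟩ := mem_biUnion.mp hu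
    obtain ⟨m, -, hvm⟩ := mem_biUnion.mp hv
    rw [dist_attach hA ht (mem_verts_attach_of_mem_branch ht hui)
        (mem_verts_attach_of_mem_branch ht hvm),
      dist_attach hA ht' (mem_verts_attach_of_mem_branch ht' hui)
        (mem_verts_attach_of_mem_branch ht' hvm)]
    rcases eq_or_ne i m with rfl | him
    · rw [attachDist_of_mem_branch hA hui hvm, attachDist_of_mem_branch hA hui hvm]
    · rw [attachDist_of_mem_branch_of_ne hA hui hvm him,
        attachDist_of_mem_branch_of_ne hA hui hvm him]
      have := hdist i m him
      omega
  unfold trans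
  rw [verts_attach ht, verts_attach ht', sum_sum_dist_union _ _ hGP, sum_sum_dist_union _ _ hGP,
    hGG t ht, hGG t' ht']
  omega

theorem Ges_eq_attach {G : KHypergraph α} {k : ℕ} (hk : 2 ≤ k) (w : Fin k → α)
    (H : Fin (k - 1) → KHypergraph α) (vr : Fin (k - 1) → α) (s : ℕ) :
    Ges G k hk w H vr s = attach G H vr fun i =>
      if (i : ℕ) < s then w ⟨k - 1, by omega⟩ else w (Fin.castLE (Nat.sub_le k 1) i) :=
  rfl

end Attach

end KHypergraph

open KHypergraph

/-- Lemma `cycle-min-moving1`: Let `G` be a connected `k`-uniform hypergraph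
with at least two edges and a pendant edge `e = {w 0, …, w (k-1)}` at `w (k-1)`, and let
`H 0, …, H (k-2)` be vertex-disjoint connected `k`-uniform hypergraphs (disjoint from `G`)
with roots `vr i ∈ V(H i)`. If some `H j` has at least one edge, then for every `s` with
(0-based) `↑j + 1 ≤ s ≤ k - 1` we have `σ(G_{e,0}) > σ(G_{e,s})`. -/
theorem stmt7 {α : Type} [DecidableEq α] (k : ℕ) (hk : 2 ≤ k) (G : KHypergraph α)
    (hgood : G.Good) (hconn : G.Connected) (hunif : G.Uniform k)
    (hsize : 2 ≤ G.edges.card)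
    (w : Fin k → α) (hwinj : Function.Injective w)
    (hemem : Finset.univ.image w ∈ G.edges)
    (hpend1 : ∀ i : Fin k, i ≠ ⟨k - 1, by omega⟩ → G.degree (w i) = 1)
    (H : Fin (k - 1) → KHypergraph α) (vr : Fin (k - 1) → α)
    (hH : ∀ i, (H i).Good ∧ (H i).Connected ∧ (H i).Uniform k ∧ vr i ∈ (H i).verts)
    (hdisj1 : ∀ i, Disjoint (H i).verts G.verts)
    (hdisj2 : ∀ i j, i ≠ j → Disjoint (H i).verts (H j).verts)
    (j : Fin (k - 1)) (hj : (H j).edges.Nonempty) :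
    ∀ s : ℕ, (j : ℕ) + 1 ≤ s → s ≤ k - 1 →
      (Ges G k hk w H vr 0).trans > (Ges G k hk w H vr s).trans := by
  intro s hjs _
  rw [Ges_eq_attach, Ges_eq_attach]
  set e := univ.image w
  set c := w ⟨k - 1, by omega⟩
  have hwe : ∀ m, w m ∈ e := fun m => mem_image_of_mem w (mem_univ m)
  have hpend : ∀ y ∈ e, y ≠ c → ∀ f ∈ G.edges, y ∈ f → f = e := by
    rintro y hy hyc f hf hyf
    obtain ⟨m, -, rfl⟩ := mem_image.mp hy
    exact eq_of_degree_eq_one (hpend1 m fun h => hyc (h ▸ rfl)) hemem hy hf hyf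
  obtain ⟨f, hf, hfe⟩ := exists_mem_ne (show 1 < G.edges.card by omega) e
  have hlt (i : Fin (k - 1)) : G.transFrom c < G.transFrom (w (Fin.castLE (Nat.sub_le k 1) i)) :=
    transFrom_lt_of_pendant hpend hgood hconn hemem (hwe _) hf hfe (by rw [hunif f hf]; omega)
      (hwe _) fun h => i.isLt.ne (by simpa using congrArg Fin.val (hwinj h))
  obtain ⟨g, hg⟩ := hj
  have hA : IsAttachable G H vr := ⟨hgood, hconn, fun i => (hH i).1, fun i => (hH i).2.1,
    fun i => (hH i).2.2.2, hdisj1, hdisj2⟩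
  refine trans_attach_lt hA (fun i => ?_) (fun i => ?_) (fun i => ?_) (fun i m him => ?_)
    (branch_nonempty (hH j).1 hg (by rw [(hH j).2.2.1 g hg]; omega))
    (by simpa [show (j : ℕ) < s by omega] using hlt j)
  · simpa using hgood e hemem (hwe _)
  · split_ifs <;> exact hgood e hemem (hwe _)
  · simp only [Nat.not_lt_zero, if_false]
    split_ifs
    exacts [(hlt i).le, le_rfl]
  · simp only [Nat.not_lt_zero, if_false]
    rw [dist_eq_one hemem (hwe _) (hwe _) fun h => him (Fin.castLE_injective _ (hwinj h))]
    split_ifs <;> exact dist_le_one hemem (hwe _) (hwe _)
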